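/- Under the standing assumptions on the 3-block Bregman ADMM, for every k ≥ 1 the iterates satisfy L_α(w^{k+1}) ≤ L_α(w^k) + ( 2(ℓ_h+ℓ₃)²/(ασ_C) − μ₃/2 )‖z^{k+1}−z^k‖² + ( 2ℓ₃²/(ασ_C) )‖z^k−z^{k−1}‖² − (μ₁/2)‖x^{k+1}−x^k‖² − (μ₂/2)‖y^{k+1}−y^k‖². -/

import Mathlib

open RealInnerProductSpace Filter

noncomputable section

/-- Euclidean space `ℝ^n`. -/
abbrev Eu (n : ℕ) := EuclideanSpace ℝ (Fin n)

/-- The Bregman distance `Δ_φ(u,v) = φ(u) − φ(v) − ⟨∇φ(v), u−v⟩` associated with a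
differentiable function `φ` whose gradient is `φ'`. -/
def Breg {n : ℕ} (φ : Eu n → ℝ) (φ' : Eu n → Eu n) (u v : Eu n) : ℝ :=
  φ u - φ v - ⟪φ' v, u - v⟫

/-- `F` is `μ`-strongly convex iff `F − (μ/2)‖·‖²` is convex. -/
def StrongConvex {n : ℕ} (μ : ℝ) (F : Eu n → ℝ) : Prop :=
  ConvexOn ℝ Set.univ (fun u => F u - μ / 2 * ‖u‖ ^ 2)

/-- The augmented Lagrangian
`L_α(x,y,z,p) = f(x)+g(y)+h(z)+⟨p, Ax+By+Cz⟩+(α/2)‖Ax+By+Cz‖²`. -/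
def Lag {n₁ n₂ n₃ m : ℕ} (f : Eu n₁ → ℝ) (g : Eu n₂ → ℝ) (h : Eu n₃ → ℝ)
    (A : Eu n₁ →L[ℝ] Eu m) (B : Eu n₂ →L[ℝ] Eu m) (C : Eu n₃ →L[ℝ] Eu m)
    (α : ℝ) (x : Eu n₁) (y : Eu n₂) (z : Eu n₃) (p : Eu m) : ℝ :=
  f x + g y + h z + ⟪p, A x + B y + C z⟫ + α / 2 * ‖A x + B y + C z‖ ^ 2

/-- All the data and standing assumptions of the 3-block Bregman ADMM:
objective functions `f, g, h`, Bregman kernels `φ₁, φ₂, φ₃` (with gradients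
`φ₁', φ₂', φ₃'`, and `h'` the gradient of `h`), matrices `A, B, C` (as linear maps),
parameters, iterate sequences `x, y, z, p`, and the standing hypotheses
(lower semicontinuity of `f, g`; differentiability with Lipschitz gradients;
convexity of kernels; the strong-convexity alternatives; quantitative full row rank
of `C`; the lower bound on `α`; and the BADMM update rules, where each of the three
primal updates is a global minimizer of the corresponding subproblem). -/
structure BADMM (n₁ n₂ n₃ m : ℕ) where
  f : Eu n₁ → ℝ
  g : Eu n₂ → ℝ
  h : Eu n₃ → ℝ
  φ₁ : Eu n₁ → ℝ
  φ₂ : Eu n₂ → ℝ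
  φ₃ : Eu n₃ → ℝ
  h' : Eu n₃ → Eu n₃
  φ₁' : Eu n₁ → Eu n₁
  φ₂' : Eu n₂ → Eu n₂
  φ₃' : Eu n₃ → Eu n₃
  A : Eu n₁ →L[ℝ] Eu m
  B : Eu n₂ →L[ℝ] Eu m
  C : Eu n₃ →L[ℝ] Eu m
  α : ℝ
  ℓh : ℝ
  ℓ₁ : ℝ
  ℓ₂ : ℝ
  ℓ₃ : ℝ
  μ₁ : ℝ
  μ₂ : ℝ
  μ₃ : ℝ
  σC : ℝ
  x : ℕ → Eu n₁
  y : ℕ → Eu n₂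
  z : ℕ → Eu n₃
  p : ℕ → Eu m
  hα_pos : 0 < α
  hf_lsc : LowerSemicontinuous f
  hg_lsc : LowerSemicontinuous g
  hgrad_h : ∀ v, HasGradientAt h (h' v) v
  hgrad_φ₁ : ∀ v, HasGradientAt φ₁ (φ₁' v) v
  hgrad_φ₂ : ∀ v, HasGradientAt φ₂ (φ₂' v) v
  hgrad_φ₃ : ∀ v, HasGradientAt φ₃ (φ₃' v) v
  hℓh_nonneg : 0 ≤ ℓh
  hℓ₁_nonneg : 0 ≤ ℓ₁
  hℓ₂_nonneg : 0 ≤ ℓ₂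
  hℓ₃_nonneg : 0 ≤ ℓ₃
  hlip_h : ∀ a b, ‖h' a - h' b‖ ≤ ℓh * ‖a - b‖
  hlip_φ₁ : ∀ a b, ‖φ₁' a - φ₁' b‖ ≤ ℓ₁ * ‖a - b‖
  hlip_φ₂ : ∀ a b, ‖φ₂' a - φ₂' b‖ ≤ ℓ₂ * ‖a - b‖
  hlip_φ₃ : ∀ a b, ‖φ₃' a - φ₃' b‖ ≤ ℓ₃ * ‖a - b‖
  hφ₁_convex : ConvexOn ℝ Set.univ φ₁
  hφ₂_convex : ConvexOn ℝ Set.univ φ₂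
  hφ₃_convex : ConvexOn ℝ Set.univ φ₃
  hμ₁_pos : 0 < μ₁
  hμ₂_pos : 0 < μ₂
  hμ₃_pos : 0 < μ₃
  hsc₁ : StrongConvex μ₁ f ∨ StrongConvex μ₁ φ₁
  hsc₂ : StrongConvex μ₂ g ∨ StrongConvex μ₂ φ₂
  hsc₃ : StrongConvex μ₃ h ∨ StrongConvex μ₃ φ₃
  hσC_pos : 0 < σC
  hC_rank : ∀ u : Eu m, σC * ‖u‖ ^ 2 ≤ ‖(ContinuousLinearMap.adjoint C) u‖ ^ 2
  hα_large : 4 * ((ℓh + ℓ₃) ^ 2 + ℓ₃ ^ 2) / (μ₃ * σC) < α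
  hx_min : ∀ k, ∀ ξ : Eu n₁,
    Lag f g h A B C α (x (k+1)) (y k) (z k) (p k) + Breg φ₁ φ₁' (x (k+1)) (x k) ≤
      Lag f g h A B C α ξ (y k) (z k) (p k) + Breg φ₁ φ₁' ξ (x k)
  hy_min : ∀ k, ∀ ξ : Eu n₂,
    Lag f g h A B C α (x (k+1)) (y (k+1)) (z k) (p k) + Breg φ₂ φ₂' (y (k+1)) (y k) ≤
      Lag f g h A B C α (x (k+1)) ξ (z k) (p k) + Breg φ₂ φ₂' ξ (y k)
  hz_min : ∀ k, ∀ ξ : Eu n₃,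
    Lag f g h A B C α (x (k+1)) (y (k+1)) (z (k+1)) (p k) + Breg φ₃ φ₃' (z (k+1)) (z k) ≤
      Lag f g h A B C α (x (k+1)) (y (k+1)) ξ (p k) + Breg φ₃ φ₃' ξ (z k)
  hp_upd : ∀ k, p (k+1) = p k + α • (A (x (k+1)) + B (y (k+1)) + C (z (k+1)))

namespace BADMM

variable {n₁ n₂ n₃ m : ℕ} (P : BADMM n₁ n₂ n₃ m)

/-- `σ₀ = 2ℓ₃²/(ασ_C)`. -/
def σ0 : ℝ := 2 * P.ℓ₃ ^ 2 / (P.α * P.σC)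

/-- `σ₁ = (1/2)·min(μ₁, μ₂, μ₃ − 4(ℓ_h+ℓ₃)²/(ασ_C) − 4ℓ₃²/(ασ_C))`. -/
def σ1 : ℝ :=
  (1 / 2) * min P.μ₁ (min P.μ₂
    (P.μ₃ - 4 * (P.ℓh + P.ℓ₃) ^ 2 / (P.α * P.σC) - 4 * P.ℓ₃ ^ 2 / (P.α * P.σC)))

/-- The augmented Lagrangian of the problem, `L_α`. -/
def L (x : Eu n₁) (y : Eu n₂) (z : Eu n₃) (p : Eu m) : ℝ :=
  Lag P.f P.g P.h P.A P.B P.C P.α x y z p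

/-- `L̂(x,y,z,p,ẑ) = L_α(x,y,z,p) + σ₀‖z−ẑ‖²`. -/
def Lhat (x : Eu n₁) (y : Eu n₂) (z : Eu n₃) (p : Eu m) (zh : Eu n₃) : ℝ :=
  P.L x y z p + P.σ0 * ‖z - zh‖ ^ 2

/-- `‖w^{k+1}−w^k‖²`. -/
def dw2 (k : ℕ) : ℝ :=
  ‖P.x (k+1) - P.x k‖ ^ 2 + ‖P.y (k+1) - P.y k‖ ^ 2 +
    ‖P.z (k+1) - P.z k‖ ^ 2 + ‖P.p (k+1) - P.p k‖ ^ 2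

end BADMM

/-!
Each primal update lowers `L_α` by `(μᵢ/2)‖Δ‖²` in its own block: either the objective of the
subproblem is `μᵢ`-strongly convex (when `f`, `g` or `h` is), so that its minimizer has quadratic
growth, or the Bregman term alone dominates `(μᵢ/2)‖Δ‖²`. The dual update raises `L_α` by exactly
`‖p^{k+1} − p^k‖²/α`. The optimality condition of the `z`-update expresses `Cᵀp^{k+1}` through
`∇h(z^{k+1})` and `∇φ₃(z^{k+1}) − ∇φ₃(z^k)`, so full row rank of `C` and the Lipschitz bounds
control that increase by `‖z^{k+1} − z^k‖²` and `‖z^k − z^{k−1}‖²`.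
-/

open Set Topology

section Convexity

variable {E : Type*} [NormedAddCommGroup E] [InnerProductSpace ℝ E]

theorem ConvexOn.le_of_hasGradientAt [CompleteSpace E] {φ : E → ℝ} {g v : E}
    (hφ : ConvexOn ℝ univ φ) (hg : HasGradientAt φ g v) (u : E) : φ v + ⟪g, u - v⟫ ≤ φ u := by
  let line : ℝ →ᵃ[ℝ] E := AffineMap.lineMap v u
  have hder : HasDerivAt (φ ∘ line) ⟪g, u - v⟫ 0 := by
    have hφv := hg.hasFDerivAt
    rw [← AffineMap.lineMap_apply_zero (k := ℝ) v u] at hφv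
    simpa using hφv.comp_hasDerivAt 0 AffineMap.hasDerivAt_lineMap
  have hslope := (hφ.comp_affineMap line).le_slope_of_hasDerivAt (mem_univ 0) (mem_univ 1)
    zero_lt_one hder
  simp only [slope_def_field, Function.comp_apply, line, AffineMap.lineMap_apply_one,
    AffineMap.lineMap_apply_zero, sub_zero, div_one] at hslope
  linarith

theorem StrongConvexOn.le_of_hasGradientAt [CompleteSpace E] {μ : ℝ} {φ : E → ℝ} {g v : E}
    (hφ : StrongConvexOn univ μ φ) (hg : HasGradientAt φ g v) (u : E) :
    φ v + ⟪g, u - v⟫ + μ / 2 * ‖u - v‖ ^ 2 ≤ φ u := by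
  have hψ : HasGradientAt (fun w => φ w - μ / 2 * ‖w‖ ^ 2) (g - μ • v) v := by
    rw [hasGradientAt_iff_hasFDerivAt] at hg ⊢
    refine (hg.sub ((hasStrictFDerivAt_norm_sq v).hasFDerivAt.const_mul (μ / 2))).congr_fderiv ?_
    ext w
    simp only [sub_apply, smul_apply, InnerProductSpace.toDual_apply_apply, coe_innerSL_apply,
      nsmul_eq_mul, Nat.cast_ofNat, smul_eq_mul, map_sub, map_smul, sub_right_inj]
    ring
  have htangent := (strongConvexOn_iff_convex.mp hφ).le_of_hasGradientAt hψ u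
  simp only [inner_sub_left, inner_sub_right, real_inner_smul_left, real_inner_self_eq_norm_sq]
    at htangent
  rw [norm_sub_sq_real, inner_sub_right, real_inner_comm v u]
  linarith

theorem StrongConvexOn.quadratic_growth {μ : ℝ} {F : E → ℝ} {a : E}
    (hF : StrongConvexOn univ μ F) (ha : IsMinOn F univ a) (u : E) :
    F a + μ / 2 * ‖u - a‖ ^ 2 ≤ F u := by
  have hseg : ∀ t ∈ Ioo (0 : ℝ) 1, F a + (1 - t) * (μ / 2 * ‖u - a‖ ^ 2) ≤ F u := by
    rintro t ⟨ht₀, ht₁⟩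
    have hconv := hF.2 (mem_univ a) (mem_univ u) (sub_nonneg.2 ht₁.le) ht₀.le (sub_add_cancel 1 t)
    have hmin : F a ≤ F ((1 - t) • a + t • u) := ha (mem_univ _)
    rw [norm_sub_rev] at hconv
    simp only [smul_eq_mul] at hconv
    refine le_of_mul_le_mul_left ?_ ht₀
    linarith
  have hlim : Tendsto (fun t : ℝ => F a + (1 - t) * (μ / 2 * ‖u - a‖ ^ 2)) (𝓝[>] 0)
      (𝓝 (F a + μ / 2 * ‖u - a‖ ^ 2)) := by
    have hcont : Continuous (fun t : ℝ => F a + (1 - t) * (μ / 2 * ‖u - a‖ ^ 2)) := by fun_prop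
    simpa using (hcont.tendsto 0).mono_left nhdsWithin_le_nhds
  refine le_of_tendsto hlim ?_
  filter_upwards [Ioo_mem_nhdsGT (zero_lt_one (α := ℝ))] using hseg

theorem HasGradientAt.add [CompleteSpace E] {f g : E → ℝ} {f' g' x : E}
    (hf : HasGradientAt f f' x) (hg : HasGradientAt g g' x) :
    HasGradientAt (fun y => f y + g y) (f' + g') x := by
  rw [hasGradientAt_iff_hasFDerivAt, map_add]
  exact hf.hasFDerivAt.add hg.hasFDerivAt

theorem IsLocalMin.hasGradientAt_eq_zero [CompleteSpace E] {f : E → ℝ} {f' x : E}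
    (hmin : IsLocalMin f x) (hf : HasGradientAt f f' x) : f' = 0 :=
  (InnerProductSpace.toDual ℝ E).map_eq_zero_iff.mp (hmin.hasFDerivAt_eq_zero hf.hasFDerivAt)

end Convexity

section Penalty

variable {E F : Type*} [NormedAddCommGroup E] [InnerProductSpace ℝ E]
  [NormedAddCommGroup F] [InnerProductSpace ℝ F]

/-- The coupling part of `L_α`, as a function of the residual `r = Ax + By + Cz`. -/
def penalty (α : ℝ) (p r : F) : ℝ := ⟪p, r⟫ + α / 2 * ‖r‖ ^ 2

theorem convexOn_penalty {α : ℝ} (hα : 0 ≤ α) (p : F) : ConvexOn ℝ univ (penalty α p) :=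
  ((innerSL ℝ p).toLinearMap.convexOn convex_univ).add
    (((convexOn_norm convex_univ).pow (fun _ _ => norm_nonneg _) 2).smul (by positivity))

theorem convexOn_penalty_comp {α : ℝ} (hα : 0 ≤ α) (p w : F) (T : E →L[ℝ] F) :
    ConvexOn ℝ univ (fun ξ => penalty α p (T ξ + w)) := by
  simpa [Function.comp_def] using
    ((convexOn_penalty hα p).translate_left w).comp_linearMap T.toLinearMap

theorem hasGradientAt_penalty_comp [CompleteSpace E] [CompleteSpace F] (α : ℝ) (p w : F)
    (T : E →L[ℝ] F) (ξ : E) :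
    HasGradientAt (fun ξ => penalty α p (T ξ + w))
      (ContinuousLinearMap.adjoint T (p + α • (T ξ + w))) ξ := by
  have hr : HasFDerivAt (fun ξ => T ξ + w) T ξ := T.hasFDerivAt.add_const w
  rw [hasGradientAt_iff_hasFDerivAt]
  refine (((innerSL ℝ p).hasFDerivAt.comp ξ hr).add (hr.norm_sq.const_mul (α / 2))).congr_fderiv ?_
  ext v
  simp only [map_add, map_smul, add_apply, smul_apply, ContinuousLinearMap.add_comp,
    ContinuousLinearMap.comp_apply, coe_innerSL_apply, InnerProductSpace.toDual_apply_apply,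
    ContinuousLinearMap.adjoint_inner_left, smul_add, nsmul_eq_mul, Nat.cast_ofNat, smul_eq_mul,
    add_right_inj]
  ring

theorem penalty_add_smul (α : ℝ) (p r : F) :
    penalty α (p + α • r) r = penalty α p r + α * ‖r‖ ^ 2 := by
  simp only [penalty, inner_add_left, real_inner_smul_left, real_inner_self_eq_norm_sq]
  ring

end Penalty

theorem lag_eq_penalty {n₁ n₂ n₃ m : ℕ} (f : Eu n₁ → ℝ) (g : Eu n₂ → ℝ) (h : Eu n₃ → ℝ)
    (A : Eu n₁ →L[ℝ] Eu m) (B : Eu n₂ →L[ℝ] Eu m) (C : Eu n₃ →L[ℝ] Eu m)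
    (α : ℝ) (x : Eu n₁) (y : Eu n₂) (z : Eu n₃) (p : Eu m) :
    Lag f g h A B C α x y z p = f x + g y + h z + penalty α p (A x + B y + C z) := by
  simp only [Lag, penalty]
  ring

section Bregman

variable {n : ℕ} {φ : Eu n → ℝ} {φ' : Eu n → Eu n}

theorem breg_self (φ : Eu n → ℝ) (φ' : Eu n → Eu n) (v : Eu n) : Breg φ φ' v v = 0 := by
  simp [Breg]

theorem le_breg_of_strongConvexOn {μ : ℝ} (hφ : StrongConvexOn univ μ φ)
    (hφ' : ∀ v, HasGradientAt φ (φ' v) v) (u v : Eu n) :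
    μ / 2 * ‖u - v‖ ^ 2 ≤ Breg φ φ' u v := by
  have htangent := hφ.le_of_hasGradientAt (hφ' v) u
  unfold Breg
  linarith

theorem breg_nonneg (hφ : ConvexOn ℝ univ φ) (hφ' : ∀ v, HasGradientAt φ (φ' v) v)
    (u v : Eu n) : 0 ≤ Breg φ φ' u v := by
  simpa using le_breg_of_strongConvexOn (strongConvexOn_zero.mpr hφ) hφ' u v

theorem convexOn_breg_left (φ' : Eu n → Eu n) (hφ : ConvexOn ℝ univ φ) (v : Eu n) :
    ConvexOn ℝ univ (fun u => Breg φ φ' u v) := by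
  refine ((hφ.add ((innerSL ℝ (-φ' v)).toLinearMap.convexOn convex_univ)).add_const
    (⟪φ' v, v⟫ - φ v)).congr fun u _ => ?_
  simp only [map_neg, ContinuousLinearMap.toLinearMap_neg, LinearMap.coe_neg,
    ContinuousLinearMap.toLinearMap_innerSL_apply, coe_innerₛₗ_apply, Pi.add_apply, Pi.neg_apply,
    Breg, inner_sub_right]
  ring

theorem hasGradientAt_breg_left {u : Eu n} (hφ' : HasGradientAt φ (φ' u) u) (v : Eu n) :
    HasGradientAt (fun w => Breg φ φ' w v) (φ' u - φ' v) u := by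
  rw [hasGradientAt_iff_hasFDerivAt] at hφ' ⊢
  refine ((hφ'.sub_const (φ v)).sub
    ((innerSL ℝ (φ' v)).hasFDerivAt.comp u ((hasFDerivAt_id u).sub_const v))).congr_fderiv ?_
  ext w
  simp

/-- One block update: `Q` is `L_α` as a function of the block, `F` the block's own objective. -/
theorem block_descent {μ : ℝ} {Q F : Eu n → ℝ} {x₀ x₁ : Eu n}
    (hQF : ConvexOn ℝ univ (fun ξ => Q ξ - F ξ)) (hsc : StrongConvex μ F ∨ StrongConvex μ φ)
    (hφ : ConvexOn ℝ univ φ) (hφ' : ∀ v, HasGradientAt φ (φ' v) v)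
    (hmin : ∀ ξ, Q x₁ + Breg φ φ' x₁ x₀ ≤ Q ξ + Breg φ φ' ξ x₀) :
    Q x₁ + μ / 2 * ‖x₁ - x₀‖ ^ 2 ≤ Q x₀ := by
  rcases hsc with hF | hφμ
  · have hsplit : (fun ξ => Q ξ + Breg φ φ' ξ x₀) =
        F + ((fun ξ => Q ξ - F ξ) + fun ξ => Breg φ φ' ξ x₀) := by
      funext ξ
      simp only [Pi.add_apply]
      ring
    have hJ : StrongConvexOn univ μ (fun ξ => Q ξ + Breg φ φ' ξ x₀) := by
      have hsum := (strongConvexOn_iff_convex.mpr hF).add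
        (uniformConvexOn_zero.mpr (hQF.add (convexOn_breg_left φ' hφ x₀)))
      rw [add_zero] at hsum
      rw [hsplit]
      exact hsum
    have hgrowth := hJ.quadratic_growth (fun ξ _ => hmin ξ) x₀
    have hnonneg := breg_nonneg hφ hφ' x₁ x₀
    rw [norm_sub_rev, breg_self] at hgrowth
    linarith
  · have hbreg := le_breg_of_strongConvexOn (strongConvexOn_iff_convex.mpr hφμ) hφ' x₁ x₀
    have hmin₀ := hmin x₀
    rw [breg_self] at hmin₀
    linarith

end Bregman

namespace BADMM

variable {n₁ n₂ n₃ m : ℕ} (P : BADMM n₁ n₂ n₃ m)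

theorem x_descent (k : ℕ) :
    P.L (P.x (k+1)) (P.y k) (P.z k) (P.p k) + P.μ₁ / 2 * ‖P.x (k+1) - P.x k‖ ^ 2 ≤
      P.L (P.x k) (P.y k) (P.z k) (P.p k) := by
  refine block_descent (Q := fun ξ => P.L ξ (P.y k) (P.z k) (P.p k)) ?_ P.hsc₁ P.hφ₁_convex
    P.hgrad_φ₁ (P.hx_min k)
  refine ((convexOn_penalty_comp P.hα_pos.le (P.p k) (P.B (P.y k) + P.C (P.z k)) P.A).add_const
    (P.g (P.y k) + P.h (P.z k))).congr fun ξ _ => ?_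
  rw [Pi.add_apply, L, lag_eq_penalty, add_assoc (P.A ξ)]
  ring

theorem y_descent (k : ℕ) :
    P.L (P.x (k+1)) (P.y (k+1)) (P.z k) (P.p k) + P.μ₂ / 2 * ‖P.y (k+1) - P.y k‖ ^ 2 ≤
      P.L (P.x (k+1)) (P.y k) (P.z k) (P.p k) := by
  refine block_descent (Q := fun ξ => P.L (P.x (k+1)) ξ (P.z k) (P.p k)) ?_ P.hsc₂ P.hφ₂_convex
    P.hgrad_φ₂ (P.hy_min k)
  refine ((convexOn_penalty_comp P.hα_pos.le (P.p k) (P.A (P.x (k+1)) + P.C (P.z k)) P.B).add_const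
    (P.f (P.x (k+1)) + P.h (P.z k))).congr fun ξ _ => ?_
  rw [Pi.add_apply, L, lag_eq_penalty,
    show P.A (P.x (k+1)) + P.B ξ + P.C (P.z k) = P.B ξ + (P.A (P.x (k+1)) + P.C (P.z k)) by abel]
  ring

theorem z_descent (k : ℕ) :
    P.L (P.x (k+1)) (P.y (k+1)) (P.z (k+1)) (P.p k) + P.μ₃ / 2 * ‖P.z (k+1) - P.z k‖ ^ 2 ≤
      P.L (P.x (k+1)) (P.y (k+1)) (P.z k) (P.p k) := by
  refine block_descent (Q := fun ξ => P.L (P.x (k+1)) (P.y (k+1)) ξ (P.p k)) ?_ P.hsc₃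
    P.hφ₃_convex P.hgrad_φ₃ (P.hz_min k)
  refine ((convexOn_penalty_comp P.hα_pos.le (P.p k) (P.A (P.x (k+1)) + P.B (P.y (k+1))) P.C).add_const
    (P.f (P.x (k+1)) + P.g (P.y (k+1)))).congr fun ξ _ => ?_
  rw [Pi.add_apply, L, lag_eq_penalty, add_comm _ (P.C ξ)]
  ring

theorem adjoint_C_p_succ (k : ℕ) :
    ContinuousLinearMap.adjoint P.C (P.p (k+1)) =
      -(P.h' (P.z (k+1)) + (P.φ₃' (P.z (k+1)) - P.φ₃' (P.z k))) := by
  set r := P.A (P.x (k+1)) + P.B (P.y (k+1))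
  have hJ : HasGradientAt
      (fun ζ => P.L (P.x (k+1)) (P.y (k+1)) ζ (P.p k) + Breg P.φ₃ P.φ₃' ζ (P.z k))
      (P.h' (P.z (k+1)) + ContinuousLinearMap.adjoint P.C (P.p (k+1)) +
        (P.φ₃' (P.z (k+1)) - P.φ₃' (P.z k))) (P.z (k+1)) := by
    have hsum := (((hasGradientAt_const _ (P.f (P.x (k+1)) + P.g (P.y (k+1)))).add
      (P.hgrad_h (P.z (k+1)))).add (hasGradientAt_penalty_comp P.α (P.p k) r P.C _)).add
      (hasGradientAt_breg_left (P.hgrad_φ₃ (P.z (k+1))) (P.z k))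
    convert hsum using 1
    · funext ζ
      rw [L, lag_eq_penalty, add_comm _ (P.C ζ)]
    · rw [P.hp_upd k, add_comm _ (P.C _), zero_add]
  have hmin : IsLocalMin
      (fun ζ => P.L (P.x (k+1)) (P.y (k+1)) ζ (P.p k) + Breg P.φ₃ P.φ₃' ζ (P.z k)) (P.z (k+1)) :=
    Filter.Eventually.of_forall (P.hz_min k)
  rw [eq_neg_iff_add_eq_zero, ← hmin.hasGradientAt_eq_zero hJ]
  abel

theorem L_succ_eq (k : ℕ) :
    P.L (P.x (k+1)) (P.y (k+1)) (P.z (k+1)) (P.p (k+1)) =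
      P.L (P.x (k+1)) (P.y (k+1)) (P.z (k+1)) (P.p k) + ‖P.p (k+1) - P.p k‖ ^ 2 / P.α := by
  have hα := P.hα_pos.ne'
  rw [L, L, lag_eq_penalty, lag_eq_penalty, P.hp_upd k, penalty_add_smul, add_sub_cancel_left,
    norm_smul, mul_pow, Real.norm_eq_abs, sq_abs]
  field_simp
  ring

theorem norm_adjoint_C_p_sub_le (k : ℕ) :
    ‖ContinuousLinearMap.adjoint P.C (P.p (k+2) - P.p (k+1))‖ ≤
      (P.ℓh + P.ℓ₃) * ‖P.z (k+2) - P.z (k+1)‖ + P.ℓ₃ * ‖P.z (k+1) - P.z k‖ := by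
  rw [map_sub, P.adjoint_C_p_succ, P.adjoint_C_p_succ]
  calc _ = ‖-(P.h' (P.z (k+2)) - P.h' (P.z (k+1))) - (P.φ₃' (P.z (k+2)) - P.φ₃' (P.z (k+1))) +
        (P.φ₃' (P.z (k+1)) - P.φ₃' (P.z k))‖ := by congr 1; abel
    _ ≤ ‖-(P.h' (P.z (k+2)) - P.h' (P.z (k+1))) - (P.φ₃' (P.z (k+2)) - P.φ₃' (P.z (k+1)))‖ +
        ‖P.φ₃' (P.z (k+1)) - P.φ₃' (P.z k)‖ := norm_add_le _ _
    _ ≤ ‖P.h' (P.z (k+2)) - P.h' (P.z (k+1))‖ + ‖P.φ₃' (P.z (k+2)) - P.φ₃' (P.z (k+1))‖ +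
        ‖P.φ₃' (P.z (k+1)) - P.φ₃' (P.z k)‖ := by
      gcongr
      exact (norm_sub_le _ _).trans_eq (by rw [norm_neg])
    _ ≤ _ := by
      linarith [P.hlip_h (P.z (k+2)) (P.z (k+1)), P.hlip_φ₃ (P.z (k+2)) (P.z (k+1)),
        P.hlip_φ₃ (P.z (k+1)) (P.z k)]

theorem dual_increment_le (k : ℕ) :
    ‖P.p (k+2) - P.p (k+1)‖ ^ 2 / P.α ≤
      2 * (P.ℓh + P.ℓ₃) ^ 2 / (P.α * P.σC) * ‖P.z (k+2) - P.z (k+1)‖ ^ 2 +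
        2 * P.ℓ₃ ^ 2 / (P.α * P.σC) * ‖P.z (k+1) - P.z k‖ ^ 2 := by
  have hbound : P.σC * ‖P.p (k+2) - P.p (k+1)‖ ^ 2 ≤
      2 * (P.ℓh + P.ℓ₃) ^ 2 * ‖P.z (k+2) - P.z (k+1)‖ ^ 2 +
        2 * P.ℓ₃ ^ 2 * ‖P.z (k+1) - P.z k‖ ^ 2 :=
    calc _ ≤ ‖ContinuousLinearMap.adjoint P.C (P.p (k+2) - P.p (k+1))‖ ^ 2 := P.hC_rank _
      _ ≤ ((P.ℓh + P.ℓ₃) * ‖P.z (k+2) - P.z (k+1)‖ + P.ℓ₃ * ‖P.z (k+1) - P.z k‖) ^ 2 :=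
        pow_le_pow_left₀ (norm_nonneg _) (P.norm_adjoint_C_p_sub_le k) 2
      _ ≤ _ := add_sq_le.trans_eq (by ring)
  have hασ := mul_pos P.hα_pos P.hσC_pos
  rw [div_mul_eq_mul_div, div_mul_eq_mul_div, ← add_div, le_div_iff₀ hασ]
  calc _ = P.σC * ‖P.p (k+2) - P.p (k+1)‖ ^ 2 := by field_simp [P.hα_pos.ne']
    _ ≤ _ := hbound

end BADMM

/-- descent estimate for the augmented Lagrangian along the iterates. -/
theorem badmm_lagrangian_descent {n₁ n₂ n₃ m : ℕ} (P : BADMM n₁ n₂ n₃ m) :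
    ∀ k : ℕ, 1 ≤ k →
      P.L (P.x (k+1)) (P.y (k+1)) (P.z (k+1)) (P.p (k+1)) ≤
        P.L (P.x k) (P.y k) (P.z k) (P.p k) +
          (2 * (P.ℓh + P.ℓ₃) ^ 2 / (P.α * P.σC) - P.μ₃ / 2) * ‖P.z (k+1) - P.z k‖ ^ 2 +
          (2 * P.ℓ₃ ^ 2 / (P.α * P.σC)) * ‖P.z k - P.z (k-1)‖ ^ 2 -
          P.μ₁ / 2 * ‖P.x (k+1) - P.x k‖ ^ 2 -
          P.μ₂ / 2 * ‖P.y (k+1) - P.y k‖ ^ 2 := by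
  intro k hk
  obtain ⟨j, rfl⟩ := Nat.exists_eq_add_of_le' hk
  rw [Nat.add_sub_cancel, P.L_succ_eq]
  linarith [P.x_descent (j+1), P.y_descent (j+1), P.z_descent (j+1), P.dual_increment_le j]
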